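/- Let ω be an invertible antisymmetric real n×n matrix and A an antisymmetric real n×n matrix. Then for every k ≥ 1 the contravariant diamond power A^{⋄'k} is antisymmetric ((A^{⋄'k})ᵀ = -A^{⋄'k}), and for all l, m ≥ 1 one has A^{⋄'(l+m)} = A^{⋄'l} ⋄' A^{⋄'m}. -/
import Mathlib


open Matrix

/-- Contravariant diamond contraction: `(A ⋄' B) = Aᵀ * ω * B`. -/
def diamondCon {n : ℕ} (ω A B : Matrix (Fin n) (Fin n) ℝ) :
    Matrix (Fin n) (Fin n) ℝ :=
  Aᵀ * ω * B

/-- Contravariant diamond powers: `A^{⋄'1} = A`, `A^{⋄'(k+1)} = A ⋄' A^{⋄'k}`. -/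
def diamondConPow {n : ℕ} (ω A : Matrix (Fin n) (Fin n) ℝ) :
    ℕ → Matrix (Fin n) (Fin n) ℝ
  | 0 => 1
  | 1 => A
  | (k + 2) => diamondCon ω A (diamondConPow ω A (k + 1))

private lemma swap_pow {n : ℕ} (X Y : Matrix (Fin n) (Fin n) ℝ) :
    ∀ k : ℕ, X * (Y * X) ^ k = (X * Y) ^ k * X := by
  intro k
  induction k with
  | zero => simp
  | succ k ih =>
    rw [pow_succ', pow_succ, ← mul_assoc X (Y*X), ← mul_assoc X Y X, mul_assoc (X*Y) X, ih,
      ← mul_assoc, ← pow_succ', ← pow_succ]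

private lemma diamondConPow_formula {n : ℕ} (ω A : Matrix (Fin n) (Fin n) ℝ)
    (hA : Aᵀ = -A) :
    ∀ k : ℕ, diamondConPow ω A (k + 1) = (-1 : ℝ) ^ k • ((A * ω) ^ k * A) := by
  intro k
  induction k with
  | zero => simp [diamondConPow]
  | succ k ih =>
    show diamondCon ω A (diamondConPow ω A (k + 1)) = _
    rw [diamondCon, ih, hA]
    simp [pow_succ', Matrix.neg_mul, mul_assoc, neg_smul, smul_smul, Matrix.mul_smul]

theorem diamondConPow_skew_and_add {n : ℕ} (ω A : Matrix (Fin n) (Fin n) ℝ)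
    (hω : IsUnit ω.det) (hωskew : ωᵀ = -ω) (hA : Aᵀ = -A) :
    (∀ k : ℕ, 1 ≤ k → (diamondConPow ω A k)ᵀ = -(diamondConPow ω A k)) ∧
    (∀ l m : ℕ, 1 ≤ l → 1 ≤ m →
      diamondConPow ω A (l + m) = diamondCon ω (diamondConPow ω A l) (diamondConPow ω A m)) := by
  have hAω : (A * ω)ᵀ = ω * A := by
    rw [Matrix.transpose_mul, hA, hωskew, Matrix.neg_mul, Matrix.mul_neg, neg_neg]
  have hskew : ∀ k : ℕ, 1 ≤ k → (diamondConPow ω A k)ᵀ = -(diamondConPow ω A k) := by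
    intro k hk
    obtain ⟨k, rfl⟩ := Nat.exists_eq_add_of_le' hk
    rw [diamondConPow_formula ω A hA]
    rw [Matrix.transpose_smul, Matrix.transpose_mul, hA, Matrix.transpose_pow, hAω,
      Matrix.neg_mul, swap_pow, smul_neg, ← neg_smul]
  refine ⟨hskew, ?_⟩
  intro l m hl hm
  obtain ⟨l, rfl⟩ := Nat.exists_eq_add_of_le' hl
  obtain ⟨m, rfl⟩ := Nat.exists_eq_add_of_le' hm
  rw [diamondCon, hskew _ (by omega)]
  have : l + 1 + (m + 1) = (l + m + 1) + 1 := by ring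
  rw [this, diamondConPow_formula ω A hA, diamondConPow_formula ω A hA,
    diamondConPow_formula ω A hA]
  rw [← neg_smul, Matrix.smul_mul, Matrix.smul_mul, Matrix.mul_smul, smul_smul]
  congr 1
  · rw [pow_succ, pow_add]; ring
  · rw [add_assoc, pow_add, pow_succ']
    simp [mul_assoc]
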